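/- arXiv:1812.04704 — 9 statements merged into one kernel-verified Lean document; each statement's English description precedes it below -/
import Mathlib

section
/- Let (X,*) be a quasigroup quandle and fix an element d₀ ∈ X. Let R be the subgroup of C₂ = ℤ⟨X×X⟩ generated by all elements (a,a), all elements (d₀,a), and all elements ∂₃(a,b,c) for a,b,c ∈ X. Then the composite of the inclusion ker ∂₂ ↪ C₂ with the quotient map C₂ → C₂/R induces an isomorphism of abelian groups H₂^Q(X) ≅ C₂/R. -/
/-!
In a quasigroup quandle the left translation `x ↦ d₀ * x` is a bijection fixing `d₀`.
Surjectivity gives, for every generator `(a, b)`, elements `x₁, x₂` with `d₀ * x₁ = a` and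
`d₀ * x₂ = a * b`, so `(a, b) - (d₀, x₂) + (d₀, x₁)` is a cycle congruent to `(a, b)` modulo `R`:
every chain is a cycle modulo `R`. Injectivity shows that the only cycles supported on the row
`{d₀} × X` are the multiples of `(d₀, d₀)`, since `∂₂ (∑ nₓ (d₀, x)) = (∑ nₓ) d₀ - ∑ nₓ (d₀ * x)`.
Hence a cycle lying in `R` already lies in `im ∂₃ + ⟨(a, a)⟩`.
-/

open FreeAbelianGroup

theorem FreeAbelianGroup.map_injective_of_leftInverse {α β : Type*} {f : α → β} {g : β → α}
    (h : Function.LeftInverse g f) : Function.Injective (map f) :=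
  Function.LeftInverse.injective (g := map g) fun x => by
    rw [← map_comp_apply, h.comp_eq_id, map_id_apply]

theorem QuotientAddGroup.exists_addEquiv_of_inf_le_of_sup_eq_top {G : Type*} [AddCommGroup G]
    {K B R : AddSubgroup G} (hBR : B ≤ R) (hKR : K ⊓ R ≤ B) (htop : K ⊔ R = ⊤) :
    ∃ e : (K ⧸ B.addSubgroupOf K) ≃+ (G ⧸ R), ∀ z : K, e z = (z : G) := by
  let φ : K ⧸ B.addSubgroupOf K →+ G ⧸ R :=
    QuotientAddGroup.lift _ ((QuotientAddGroup.mk' R).comp K.subtype) fun z hz =>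
      (QuotientAddGroup.eq_zero_iff _).mpr (hBR (AddSubgroup.mem_addSubgroupOf.mp hz))
  have hinj : Function.Injective φ := by
    refine (injective_iff_map_eq_zero φ).mpr fun q => QuotientAddGroup.induction_on q fun z hz => ?_
    have hzR : (z : G) ∈ R := (QuotientAddGroup.eq_zero_iff _).mp hz
    exact (QuotientAddGroup.eq_zero_iff _).mpr
      (AddSubgroup.mem_addSubgroupOf.mpr (hKR ⟨z.2, hzR⟩))
  have hsurj : Function.Surjective φ := by
    refine fun q => QuotientAddGroup.induction_on q fun x => ?_
    obtain ⟨k, hk, r, hr, rfl⟩ := AddSubgroup.mem_sup.mp (htop ▸ AddSubgroup.mem_top x)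
    refine ⟨(⟨k, hk⟩ : K), QuotientAddGroup.eq.mpr ?_⟩
    simpa using hr
  exact ⟨AddEquiv.ofBijective φ ⟨hinj, hsurj⟩, fun _ => rfl⟩

namespace QuandleHomology

variable {X : Type*} (op : X → X → X)

def d₂ : FreeAbelianGroup (X × X) →+ FreeAbelianGroup X :=
  lift fun p => of p.1 - of (op p.1 p.2)

def d₃ : FreeAbelianGroup (X × X × X) →+ FreeAbelianGroup (X × X) :=
  lift fun p => of (p.1, p.2.2) - of (op p.1 p.2.1, p.2.2) - of (p.1, p.2.1)
    + of (op p.1 p.2.2, op p.2.1 p.2.2)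

def boundaries : AddSubgroup (FreeAbelianGroup (X × X)) :=
  (d₃ op).range ⊔ AddSubgroup.closure (Set.range fun a : X => of (a, a))

def relations (d₀ : X) : AddSubgroup (FreeAbelianGroup (X × X)) :=
  AddSubgroup.closure
    ((Set.range fun a : X => of (a, a)) ∪ (Set.range fun a : X => of (d₀, a)) ∪
      (Set.range fun q : X × X × X => d₃ op (of q)))

variable {op}

theorem d₂_comp_d₃ (hdist : ∀ a b c, op (op a b) c = op (op a c) (op b c)) :
    (d₂ op).comp (d₃ op) = 0 := by
  ext ⟨a, b, c⟩
  simp only [AddMonoidHom.comp_apply, d₃, d₂, lift_apply_of, map_add, map_sub, hdist a b c,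
    AddMonoidHom.zero_apply]
  abel

theorem of_diag_mem_boundaries (a : X) : of (a, a) ∈ boundaries op :=
  AddSubgroup.mem_sup_right (AddSubgroup.subset_closure ⟨a, rfl⟩)

theorem boundaries_le_ker (hidem : ∀ a, op a a = a)
    (hdist : ∀ a b c, op (op a b) c = op (op a c) (op b c)) :
    boundaries op ≤ (d₂ op).ker := by
  refine sup_le ?_ ((AddSubgroup.closure_le _).mpr ?_)
  · rintro _ ⟨y, rfl⟩
    exact DFunLike.congr_fun (d₂_comp_d₃ hdist) y
  · rintro _ ⟨a, rfl⟩
    simp [d₂, hidem]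

variable (op) in
theorem boundaries_le_relations (d₀ : X) : boundaries op ≤ relations op d₀ := by
  refine sup_le ?_ ((AddSubgroup.closure_le _).mpr ?_)
  · rintro _ ⟨y, rfl⟩
    induction y using FreeAbelianGroup.induction_on with
    | zero => simp
    | of q => exact AddSubgroup.subset_closure (Or.inr ⟨q, rfl⟩)
    | neg q hq => simpa using hq
    | add u v hu hv => simpa using add_mem hu hv
  · rintro _ ⟨a, rfl⟩
    exact AddSubgroup.subset_closure (Or.inl (Or.inl ⟨a, rfl⟩))

variable (op) in
theorem relations_le_boundaries_sup_range (d₀ : X) :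
    relations op d₀ ≤ boundaries op ⊔ (map (Prod.mk d₀)).range := by
  rw [relations, AddSubgroup.closure_le]
  rintro _ ((⟨a, rfl⟩ | ⟨a, rfl⟩) | ⟨q, rfl⟩)
  · exact AddSubgroup.mem_sup_left (of_diag_mem_boundaries a)
  · exact AddSubgroup.mem_sup_right ⟨of a, map_of_apply a⟩
  · exact AddSubgroup.mem_sup_left (AddSubgroup.mem_sup_left ⟨of q, rfl⟩)

variable (op) in
theorem d₂_comp_map_prodMk (d₀ : X) :
    (d₂ op).comp (map (Prod.mk d₀)) =
      (zmultiplesHom _ (of d₀)).comp (lift fun _ => (1 : ℤ)) - map (op d₀) := by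
  ext a
  simp [d₂]

theorem ker_inf_range_map_prodMk_le (hidem : ∀ a, op a a = a) {d₀ : X}
    (hinj : Function.Injective (op d₀)) :
    (d₂ op).ker ⊓ (map (Prod.mk d₀)).range ≤ boundaries op := by
  rintro _ ⟨hker, u, rfl⟩
  set n : ℤ := lift (fun _ => (1 : ℤ)) u
  have hmap : map (op d₀) u = map (op d₀) (n • of d₀) := by
    have h := DFunLike.congr_fun (d₂_comp_map_prodMk op d₀) u
    simp only [AddMonoidHom.comp_apply, AddMonoidHom.mem_ker.mp hker, AddMonoidHom.sub_apply,
      zmultiplesHom_apply] at h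
    rw [map_zsmul, map_of_apply, hidem]
    exact (sub_eq_zero.mp h.symm).symm
  have : Nonempty X := ⟨d₀⟩
  have hu : u = n • of d₀ := map_injective_of_leftInverse (Function.leftInverse_invFun hinj) hmap
  rw [hu, map_zsmul, map_of_apply]
  exact zsmul_mem (of_diag_mem_boundaries d₀) n

theorem ker_inf_relations_le (hidem : ∀ a, op a a = a)
    (hdist : ∀ a b c, op (op a b) c = op (op a c) (op b c)) {d₀ : X}
    (hinj : Function.Injective (op d₀)) :
    (d₂ op).ker ⊓ relations op d₀ ≤ boundaries op :=
  calc (d₂ op).ker ⊓ relations op d₀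
      ≤ (d₂ op).ker ⊓ (boundaries op ⊔ (map (Prod.mk d₀)).range) :=
        inf_le_inf_left _ (relations_le_boundaries_sup_range op d₀)
    _ = boundaries op ⊔ (d₂ op).ker ⊓ (map (Prod.mk d₀)).range := by
        rw [inf_comm, sup_inf_assoc_of_le _ (boundaries_le_ker hidem hdist), inf_comm]
    _ ≤ boundaries op := sup_le le_rfl (ker_inf_range_map_prodMk_le hidem hinj)

theorem ker_sup_relations_eq_top {d₀ : X} (hsurj : Function.Surjective (op d₀)) :
    (d₂ op).ker ⊔ relations op d₀ = ⊤ := by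
  have hrow : ∀ x, of (d₀, x) ∈ relations op d₀ := fun x =>
    AddSubgroup.subset_closure (Or.inl (Or.inr ⟨x, rfl⟩))
  refine (AddSubgroup.eq_top_iff' _).mpr fun y => ?_
  induction y using FreeAbelianGroup.induction_on with
  | zero => exact zero_mem _
  | of p =>
    obtain ⟨x₁, hx₁⟩ := hsurj p.1
    obtain ⟨x₂, hx₂⟩ := hsurj (op p.1 p.2)
    have hcycle : of p - of (d₀, x₂) + of (d₀, x₁) ∈ (d₂ op).ker := by
      simp only [AddMonoidHom.mem_ker, map_add, map_sub, d₂, lift_apply_of, hx₁, hx₂]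
      abel
    have hsplit : of p = (of p - of (d₀, x₂) + of (d₀, x₁)) + (of (d₀, x₂) - of (d₀, x₁)) := by
      abel
    rw [hsplit]
    exact add_mem (AddSubgroup.mem_sup_left hcycle)
      (AddSubgroup.mem_sup_right (sub_mem (hrow x₂) (hrow x₁)))
  | neg p hp => exact neg_mem hp
  | add u v hu hv => exact add_mem hu hv

end QuandleHomology

theorem second_quandle_homology_iso_quotient_of_quasigroup_quandle_general
    {X : Type*} (op : X → X → X)
    (hidem : ∀ a, op a a = a)
    (hdist : ∀ a b c, op (op a b) c = op (op a c) (op b c))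
    (hquasi : ∀ a b, ∃! c, op a c = b)
    (d₀ : X)
    (d2 : FreeAbelianGroup (X × X) →+ FreeAbelianGroup X)
    (hd2 : d2 = FreeAbelianGroup.lift fun p : X × X => of p.1 - of (op p.1 p.2))
    (d3 : FreeAbelianGroup (X × X × X) →+ FreeAbelianGroup (X × X))
    (hd3 : d3 = FreeAbelianGroup.lift fun p : X × X × X =>
      of (p.1, p.2.2) - of (op p.1 p.2.1, p.2.2) - of (p.1, p.2.1)
        + of (op p.1 p.2.2, op p.2.1 p.2.2))
    (B : AddSubgroup (FreeAbelianGroup (X × X)))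
    (hB : B = d3.range ⊔ AddSubgroup.closure (Set.range fun a : X => of (a, a)))
    (R : AddSubgroup (FreeAbelianGroup (X × X)))
    (hR : R = AddSubgroup.closure
      ((Set.range fun a : X => of (a, a)) ∪ (Set.range fun a : X => of (d₀, a)) ∪
        (Set.range fun q : X × X × X => d3 (of q)))) :
    ∃ e : (d2.ker ⧸ B.addSubgroupOf d2.ker) ≃+ (FreeAbelianGroup (X × X) ⧸ R),
      ∀ z : d2.ker, e (QuotientAddGroup.mk z) = QuotientAddGroup.mk z.1 := by
  obtain rfl : d2 = QuandleHomology.d₂ op := hd2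
  obtain rfl : d3 = QuandleHomology.d₃ op := hd3
  obtain rfl : B = QuandleHomology.boundaries op := hB
  obtain rfl : R = QuandleHomology.relations op d₀ := hR
  have hbij : Function.Bijective (op d₀) :=
    (Function.bijective_iff_existsUnique _).mpr (hquasi d₀)
  exact QuotientAddGroup.exists_addEquiv_of_inf_le_of_sup_eq_top
    (QuandleHomology.boundaries_le_relations op d₀)
    (QuandleHomology.ker_inf_relations_le hidem hdist hbij.injective)
    (QuandleHomology.ker_sup_relations_eq_top hbij.surjective)

/-- **Proposition.** Let `(X, op)` be a quasigroup quandle and fix `d₀ ∈ X`.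
Let `R` be the subgroup of `C₂ = ℤ⟨X × X⟩` generated by all `(a, a)`, all `(d₀, a)`,
and all `∂₃(a, b, c)`.  Then the composite of the inclusion `ker ∂₂ ↪ C₂` with the
quotient map `C₂ → C₂/R` induces an isomorphism
`H₂^Q(X) = ker ∂₂ / (im ∂₃ + ⟨(a,a)⟩) ≅ C₂/R`. -/
theorem second_quandle_homology_iso_quotient_of_quasigroup_quandle
    {X : Type*} (op : X → X → X)
    (hidem : ∀ a, op a a = a)
    (hinv : ∀ b, Function.Bijective fun x => op x b)
    (hdist : ∀ a b c, op (op a b) c = op (op a c) (op b c))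
    (hquasi : ∀ a b, ∃! c, op a c = b)
    (d₀ : X)
    (d2 : FreeAbelianGroup (X × X) →+ FreeAbelianGroup X)
    (hd2 : d2 = FreeAbelianGroup.lift fun p : X × X => of p.1 - of (op p.1 p.2))
    (d3 : FreeAbelianGroup (X × X × X) →+ FreeAbelianGroup (X × X))
    (hd3 : d3 = FreeAbelianGroup.lift fun p : X × X × X =>
      of (p.1, p.2.2) - of (op p.1 p.2.1, p.2.2) - of (p.1, p.2.1)
        + of (op p.1 p.2.2, op p.2.1 p.2.2))
    (B : AddSubgroup (FreeAbelianGroup (X × X)))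
    (hB : B = d3.range ⊔ AddSubgroup.closure (Set.range fun a : X => of (a, a)))
    (R : AddSubgroup (FreeAbelianGroup (X × X)))
    (hR : R = AddSubgroup.closure
      ((Set.range fun a : X => of (a, a)) ∪ (Set.range fun a : X => of (d₀, a)) ∪
        (Set.range fun q : X × X × X => d3 (of q)))) :
    ∃ e : (d2.ker ⧸ B.addSubgroupOf d2.ker) ≃+ (FreeAbelianGroup (X × X) ⧸ R),
      ∀ z : d2.ker, e (QuotientAddGroup.mk z) = QuotientAddGroup.mk z.1 :=
  second_quandle_homology_iso_quotient_of_quasigroup_quandle_general op hidem hdist hquasi d₀ d2 hd2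
    d3 hd3 B hB R hR
end

section
/- Let (X,*) be a quasigroup quandle and fix an element d₀ ∈ X. Let R be the subgroup of C₂ = ℤ⟨X×X⟩ generated by all elements (a,a), all elements (d₀,a), and all elements ∂₃(a,b,c) for a,b,c ∈ X. Then for every c ∈ X, the generator (c,d₀) lies in R; that is, the class of (c,d₀) in C₂/R is zero. -/
open FreeAbelianGroup

def quandleBoundary₃ {X : Type*} (op : X → X → X) :
    FreeAbelianGroup (X × X × X) →+ FreeAbelianGroup (X × X) :=
  lift fun p : X × X × X =>
    of (p.1, p.2.2) - of (op p.1 p.2.1, p.2.2) - of (p.1, p.2.1)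
      + of (op p.1 p.2.2, op p.2.1 p.2.2)

theorem quandleBoundary₃_of {X : Type*} (op : X → X → X) (a b c : X) :
    quandleBoundary₃ op (of (a, b, c)) =
      of (a, c) - of (op a b, c) - of (a, b) + of (op a c, op b c) :=
  lift_apply_of _ _

/-- Idempotency turns the last term of `∂₃(a, b, a)` into `(a, b * a)`. -/
theorem of_op_self_right_eq {X : Type*} (op : X → X → X) (hidem : ∀ a, op a a = a) (a b : X) :
    of (op a b, a) =
      of (a, a) + of (a, op b a) - of (a, b) - quandleBoundary₃ op (of (a, b, a)) := by
  rw [quandleBoundary₃_of, hidem]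
  abel

theorem generator_with_second_coordinate_basepoint_mem_relations_general
    {X : Type*} (op : X → X → X)
    (hidem : ∀ a, op a a = a)
    (hquasi : ∀ a b, ∃! c, op a c = b)
    (d₀ : X)
    (d3 : FreeAbelianGroup (X × X × X) →+ FreeAbelianGroup (X × X))
    (hd3 : d3 = FreeAbelianGroup.lift fun p : X × X × X =>
      of (p.1, p.2.2) - of (op p.1 p.2.1, p.2.2) - of (p.1, p.2.1)
        + of (op p.1 p.2.2, op p.2.1 p.2.2))
    (R : AddSubgroup (FreeAbelianGroup (X × X)))
    (hR : R = AddSubgroup.closure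
      ((Set.range fun a : X => of (a, a)) ∪ (Set.range fun a : X => of (d₀, a)) ∪
        (Set.range fun q : X × X × X => d3 (of q)))) :
    ∀ c : X, of (c, d₀) ∈ R := by
  intro c
  obtain rfl : d3 = quandleBoundary₃ op := hd3
  subst hR
  obtain ⟨y, rfl, -⟩ := hquasi d₀ c
  rw [of_op_self_right_eq op hidem]
  refine sub_mem (sub_mem (add_mem ?_ ?_) ?_) ?_ <;>
    exact AddSubgroup.subset_closure (by simp)

/-- **Proposition.** Let `(X, op)` be a quasigroup quandle and fix `d₀ ∈ X`.
Let `R` be the subgroup of `C₂ = ℤ⟨X × X⟩` generated by all `(a, a)`, all `(d₀, a)`,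
and all `∂₃(a, b, c)`.  Then for every `c ∈ X` the generator `(c, d₀)` lies in `R`;
that is, the class of `(c, d₀)` in `C₂/R` is zero. -/
theorem generator_with_second_coordinate_basepoint_mem_relations
    {X : Type*} (op : X → X → X)
    (hidem : ∀ a, op a a = a)
    (hinv : ∀ b, Function.Bijective fun x => op x b)
    (hdist : ∀ a b c, op (op a b) c = op (op a c) (op b c))
    (hquasi : ∀ a b, ∃! c, op a c = b)
    (d₀ : X)
    (d3 : FreeAbelianGroup (X × X × X) →+ FreeAbelianGroup (X × X))
    (hd3 : d3 = FreeAbelianGroup.lift fun p : X × X × X =>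
      of (p.1, p.2.2) - of (op p.1 p.2.1, p.2.2) - of (p.1, p.2.1)
        + of (op p.1 p.2.2, op p.2.1 p.2.2))
    (R : AddSubgroup (FreeAbelianGroup (X × X)))
    (hR : R = AddSubgroup.closure
      ((Set.range fun a : X => of (a, a)) ∪ (Set.range fun a : X => of (d₀, a)) ∪
        (Set.range fun q : X × X × X => d3 (of q)))) :
    ∀ c : X, of (c, d₀) ∈ R :=
  generator_with_second_coordinate_basepoint_mem_relations_general op hidem hquasi d₀ d3 hd3 R hR
end

section
/- Let X be an abelian group with automorphism t : X → X such that 1−t is also an automorphism, made into an Alexander quandle by a * b = t a + (1−t) b. Let N be the subgroup of X ⊗_ℤ X generated by all elements x ⊗ y − y ⊗ t x, and define φ : X × X → (X ⊗_ℤ X)/N by φ(x,y) = class of x ⊗ (1−t)y. Then φ is a quandle 2-cocycle: φ(a,a) = 0 for all a ∈ X, and φ(x,z) − φ(x*y, z) − φ(x,y) + φ(x*z, y*z) = 0 for all x,y,z ∈ X. -/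
/-!
Modulo `N` the pairing `B a b = [a ⊗ b]` is twisted-symmetric, `B a b = B b (t a)`. Applying this
twice makes `B` invariant under `t`, and with `b = a` it gives `B a ((1 - t) a) = 0`. Expanding the
cocycle expression bilinearly, these two facts and one more use of twisted symmetry cancel all
terms. So the cocycle property holds for every twisted-symmetric biadditive map, and the quotient
of `X ⊗ X` by `N` is the universal target of one.
-/

open TensorProduct

def IsQuandleTwoCocycle {X A : Type*} [AddCommGroup A] (op : X → X → X) (φ : X → X → A) :
    Prop :=
  (∀ a, φ a a = 0) ∧ ∀ x y z, φ x z - φ (op x y) z - φ x y + φ (op x z) (op y z) = 0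

section TwistedSymmetric

variable {X A : Type*} [AddCommGroup X] [AddCommGroup A] {t : X →+ X} {B : X →+ X →+ A}

theorem apply_map_map_of_twisted (hB : ∀ a b, B a b = B b (t a)) (a b : X) :
    B (t a) (t b) = B a b :=
  ((hB a b).trans (hB b (t a))).symm

theorem apply_sub_map_eq_zero_of_twisted (hB : ∀ a b, B a b = B b (t a)) (a : X) :
    B a (a - t a) = 0 := by
  rw [map_sub, hB a a, sub_self]

theorem isQuandleTwoCocycle_of_twisted (hB : ∀ a b, B a b = B b (t a)) :
    IsQuandleTwoCocycle (fun a b => t a + (b - t b)) (fun a b => B a (b - t b)) := by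
  refine ⟨apply_sub_map_eq_zero_of_twisted hB, fun x y z => ?_⟩
  dsimp only
  generalize hu : y - t y = u
  generalize z - t z = v
  have hs : t y + v - t (t y + v) = t u + (v - t v) := by
    rw [← hu]
    simp only [map_add, map_sub]
    abel
  rw [hs]
  simp only [map_add, AddMonoidHom.add_apply]
  rw [apply_sub_map_eq_zero_of_twisted hB, apply_map_map_of_twisted hB, ← hB u v,
    map_sub (B (t x)), apply_map_map_of_twisted hB]
  abel

end TwistedSymmetric

/-- **Corollary.** Let `X` be an abelian group with automorphism `t` such that `1 - t`
(called `s` here, `s x = x - t x`) is also an automorphism, made into an Alexander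
quandle by `op a b = t a + (1 - t) b`.  Let `N ⊆ X ⊗ X` be the subgroup generated by
all `x ⊗ y - y ⊗ t x` and define `φ : X × X → (X ⊗ X)/N` by `φ (x, y) = [x ⊗ (1-t) y]`.
Then `φ` is a quandle 2-cocycle: `φ (a, a) = 0` and
`φ (x, z) - φ (x * y, z) - φ (x, y) + φ (x * z, y * z) = 0`. -/
theorem universal_alexander_two_cocycle
    {X : Type*} [AddCommGroup X] (t s : X ≃+ X) (hs : ∀ x, s x = x - t x)
    (op : X → X → X) (hop : ∀ a b, op a b = t a + s b)
    (N : AddSubgroup (X ⊗[ℤ] X))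
    (hN : N = AddSubgroup.closure {z | ∃ x y : X, z = x ⊗ₜ[ℤ] y - y ⊗ₜ[ℤ] t x})
    (φ : X → X → (X ⊗[ℤ] X) ⧸ N)
    (hφ : ∀ x y, φ x y = QuotientAddGroup.mk (x ⊗ₜ[ℤ] s y)) :
    (∀ a : X, φ a a = 0) ∧
      (∀ x y z : X, φ x z - φ (op x y) z - φ x y + φ (op x z) (op y z) = 0) := by
  let B : X →+ X →+ (X ⊗[ℤ] X) ⧸ N :=
    (LinearMap.toAddMonoidHom'.comp (TensorProduct.mk ℤ X X).toAddMonoidHom).compr₂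
      (QuotientAddGroup.mk' N)
  have hB : ∀ a b, B a b = B b (t a) := fun a b =>
    QuotientAddGroup.eq_iff_sub_mem.2 (hN ▸ AddSubgroup.subset_closure ⟨a, b, rfl⟩)
  obtain rfl : op = fun a b => t a + (b - t b) := by
    funext a b
    rw [hop, hs]
  obtain rfl : φ = fun a b => B a (b - t b) := by
    funext a b
    rw [hφ, hs]
    rfl
  exact isQuandleTwoCocycle_of_twisted (t := t.toAddMonoidHom) hB
end

section
/- Let X be an abelian group with automorphism t : X → X such that 1−t is also an automorphism. Let G be the quotient of the free abelian group ℤ⟨X×X⟩ by the subgroup generated by the elements (a,(1−t)a), (a,0), (0,a) for all a ∈ X, and the elements (x,z) − (x,y) − (tx+y, z) + (tx+z, ty+(1−t)z) for all x,y,z ∈ X; write [a,b] for the class of (a,b) in G. Then [t x, t y] = [x, y] in G for all x, y ∈ X. -/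
/-! The fourth relation with `w = 0` reads `[x, 0] - [x, y] - [t x + y, 0] + [t x, t y] = 0`,
and both `[_, 0]` terms vanish by the second relation. -/

open FreeAbelianGroup

theorem bracket_t_invariance_general
    {X : Type*} [AddCommGroup X] (t : X ≃+ X)
    (Rel : AddSubgroup (FreeAbelianGroup (X × X)))
    (hRel : Rel = AddSubgroup.closure
      ({z | ∃ a : X, z = of (a, a - t a)} ∪ {z | ∃ a : X, z = of (a, (0 : X))} ∪
        {z | ∃ a : X, z = of ((0 : X), a)} ∪
        {z | ∃ x y w : X, z = of (x, w) - of (x, y) - of (t x + y, w)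
          + of (t x + w, t y + (w - t w))}))
    (br : X → X → FreeAbelianGroup (X × X) ⧸ Rel)
    (hbr : ∀ a b : X, br a b = QuotientAddGroup.mk (of (a, b)))
    : ∀ x y : X, br (t x) (t y) = br x y := by
  intro x y
  have zero_right_mem (a : X) : of (a, (0 : X)) ∈ Rel :=
    hRel ▸ AddSubgroup.subset_closure (Or.inl (Or.inl (Or.inr ⟨a, rfl⟩)))
  have cocycle_mem :
      of (x, (0 : X)) - of (x, y) - of (t x + y, (0 : X)) + of (t x, t y) ∈ Rel :=
    hRel ▸ AddSubgroup.subset_closure (Or.inr ⟨x, y, 0, by simp⟩)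
  rw [hbr, hbr, QuotientAddGroup.eq_iff_sub_mem]
  convert Rel.add_mem (Rel.sub_mem cocycle_mem (zero_right_mem x)) (zero_right_mem (t x + y))
    using 1
  abel

/-- **Lemma.** In the group `G` (the quotient of `ℤ⟨X × X⟩` by the stated
relations, with bracket `br a b = [a, b]`), one has `[t x, t y] = [x, y]`. -/
theorem bracket_t_invariance
    {X : Type*} [AddCommGroup X] (t : X ≃+ X)
    (ht : Function.Bijective fun x : X => x - t x)
    (Rel : AddSubgroup (FreeAbelianGroup (X × X)))
    (hRel : Rel = AddSubgroup.closure
      ({z | ∃ a : X, z = of (a, a - t a)} ∪ {z | ∃ a : X, z = of (a, (0 : X))} ∪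
        {z | ∃ a : X, z = of ((0 : X), a)} ∪
        {z | ∃ x y w : X, z = of (x, w) - of (x, y) - of (t x + y, w)
          + of (t x + w, t y + (w - t w))}))
    (br : X → X → FreeAbelianGroup (X × X) ⧸ Rel)
    (hbr : ∀ a b : X, br a b = QuotientAddGroup.mk (of (a, b)))
    : ∀ x y : X, br (t x) (t y) = br x y :=
  bracket_t_invariance_general t Rel hRel br hbr
end

section
/- Let X be an abelian group with automorphism t : X → X such that 1−t is also an automorphism. Let G be the quotient of the free abelian group ℤ⟨X×X⟩ by the subgroup generated by the elements (a,(1−t)a), (a,0), (0,a) for all a ∈ X, and the elements (x,z) − (x,y) − (tx+y, z) + (tx+z, ty+(1−t)z) for all x,y,z ∈ X; write [a,b] for the class of (a,b) in G. Then [x, −t x] = [x, z] + [−x, t x + z] in G for all x, z ∈ X. -/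
/-!
Taking `x = 0` in the four-term relation (using `[0, a] = 0`) gives the twisted symmetry
`[y, z] = [z, t y + (1 - t) z]`; combining two instances of the relation with it shows
that `[u, v]` only depends on `v` modulo `(1 - t) u`. With these, the instance
`(x, z, -t x)` of the four-term relation becomes the claimed identity.
-/

open FreeAbelianGroup

section BracketRelations

variable {X A : Type*} [AddCommGroup X] [AddCommGroup A] {t : X →+ X} {f : X → X → A}

theorem bracket_eq_bracket_twist
    (hf : ∀ x y z, f x z - f x y - f (t x + y) z + f (t x + z) (t y + (z - t z)) = 0)
    (h0 : ∀ a, f 0 a = 0) (y z : X) : f y z = f z (t y + (z - t z)) := by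
  simpa only [map_zero, zero_add, h0, sub_self, zero_sub, neg_add_eq_zero] using hf 0 y z

theorem bracket_add_sub_self_apply
    (hf : ∀ x y z, f x z - f x y - f (t x + y) z + f (t x + z) (t y + (z - t z)) = 0)
    (h0 : ∀ a, f 0 a = 0) (u v : X) : f u (v + (u - t u)) = f u v := by
  have h1 := hf u v (u + v)
  have h2 := hf u (u + v) (v + (u - t u))
  have h3 := bracket_eq_bracket_twist hf h0 (t u + v) (u + v)
  simp only [map_add, map_sub] at h1 h2 h3
  linear_combination (norm := abel_nf) h1 + h2 + h3

theorem bracket_neg_apply_self_eq_add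
    (hf : ∀ x y z, f x z - f x y - f (t x + y) z + f (t x + z) (t y + (z - t z)) = 0)
    (h0 : ∀ a, f 0 a = 0) (x z : X) : f x (-t x) = f x z + f (-x) (t x + z) := by
  have h1 := hf x z (-t x)
  rw [add_neg_cancel, h0, add_zero, sub_sub, sub_eq_zero] at h1
  rw [h1, bracket_eq_bracket_twist hf h0 (-x), map_neg, bracket_add_sub_self_apply hf h0]

end BracketRelations

theorem bracket_splitting_relation_general
    {X : Type*} [AddCommGroup X] (t : X ≃+ X)
    (Rel : AddSubgroup (FreeAbelianGroup (X × X)))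
    (hRel : Rel = AddSubgroup.closure
      ({z | ∃ a : X, z = of (a, a - t a)} ∪ {z | ∃ a : X, z = of (a, (0 : X))} ∪
        {z | ∃ a : X, z = of ((0 : X), a)} ∪
        {z | ∃ x y w : X, z = of (x, w) - of (x, y) - of (t x + y, w)
          + of (t x + w, t y + (w - t w))}))
    (br : X → X → FreeAbelianGroup (X × X) ⧸ Rel)
    (hbr : ∀ a b : X, br a b = QuotientAddGroup.mk (of (a, b)))
    : ∀ x z : X, br x (-(t x)) = br x z + br (-x) (t x + z) := by
  have h4 : ∀ x y w : X,
      br x w - br x y - br (t x + y) w + br (t x + w) (t y + (w - t w)) = 0 := by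
    intro x y w
    simp only [hbr, ← QuotientAddGroup.mk_sub, ← QuotientAddGroup.mk_add,
      QuotientAddGroup.eq_zero_iff, hRel]
    exact AddSubgroup.subset_closure (Or.inr ⟨x, y, w, rfl⟩)
  have h0 : ∀ a : X, br 0 a = 0 := by
    intro a
    rw [hbr, QuotientAddGroup.eq_zero_iff, hRel]
    exact AddSubgroup.subset_closure (Or.inl (Or.inr ⟨a, rfl⟩))
  exact bracket_neg_apply_self_eq_add (t := t.toAddMonoidHom) h4 h0

/-- **Lemma.** In the group `G` (the quotient of `ℤ⟨X × X⟩` by the stated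
relations, with bracket `br a b = [a, b]`), one has `[x, -t x] = [x, z] + [-x, t x + z]`. -/
theorem bracket_splitting_relation
    {X : Type*} [AddCommGroup X] (t : X ≃+ X)
    (ht : Function.Bijective fun x : X => x - t x)
    (Rel : AddSubgroup (FreeAbelianGroup (X × X)))
    (hRel : Rel = AddSubgroup.closure
      ({z | ∃ a : X, z = of (a, a - t a)} ∪ {z | ∃ a : X, z = of (a, (0 : X))} ∪
        {z | ∃ a : X, z = of ((0 : X), a)} ∪
        {z | ∃ x y w : X, z = of (x, w) - of (x, y) - of (t x + y, w)
          + of (t x + w, t y + (w - t w))}))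
    (br : X → X → FreeAbelianGroup (X × X) ⧸ Rel)
    (hbr : ∀ a b : X, br a b = QuotientAddGroup.mk (of (a, b)))
    : ∀ x z : X, br x (-(t x)) = br x z + br (-x) (t x + z) :=
  bracket_splitting_relation_general t Rel hRel br hbr
end

section
/- Let X be an abelian group with automorphism t : X → X such that 1−t is also an automorphism. Let G be the quotient of the free abelian group ℤ⟨X×X⟩ by the subgroup generated by the elements (a,(1−t)a), (a,0), (0,a) for all a ∈ X, and the elements (x,z) − (x,y) − (tx+y, z) + (tx+z, ty+(1−t)z) for all x,y,z ∈ X; write [a,b] for the class of (a,b) in G. Then [a, b] = [b, t a] in G for all a, b ∈ X. -/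
open FreeAbelianGroup

section TwistedBracket

variable {X A : Type*} [AddCommGroup X] [AddCommGroup A] (t : X →+ X) {br : X → X → A}

theorem bracket_eq_bracket_shift (zero_left : ∀ c, br 0 c = 0)
    (cocycle : ∀ x y w, br x w - br x y - br (t x + y) w + br (t x + w) (t y + (w - t w)) = 0)
    (y w : X) : br y w = br w (t y + (w - t w)) := by
  have h := cocycle 0 y w
  simpa only [map_zero, zero_add, zero_left, sub_self, zero_sub, neg_add_eq_zero] using h

/-- Apply the shift to `(a, b)`, then use the relation at `(b, t a + (b - t b), t a)`: its two
remaining terms are linked by two more shifts and cancel. -/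
theorem bracket_swap_of_relations (zero_left : ∀ c, br 0 c = 0)
    (cocycle : ∀ x y w, br x w - br x y - br (t x + y) w + br (t x + w) (t y + (w - t w)) = 0)
    (a b : X) : br a b = br b (t a) := by
  have shift := bracket_eq_bracket_shift t zero_left cocycle
  have h := cocycle b (t a + (b - t b)) (t a)
  have e₁ : t b + (t a + (b - t b)) = t a + b := by abel
  have e₂ : t (t a + (b - t b)) + (t a - t (t a)) = t (t a) + (t a + t b - t (t a + t b)) := by
    simp only [map_add, map_sub]; abel
  have chain : br (t a + b) (t a) = br (t a + t b) (t (t a) + (t a + t b - t (t a + t b))) := by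
    have e : t (t a + b) + (t a - t (t a)) = t a + t b := by rw [map_add]; abel
    rw [shift (t a + b) (t a), e, shift (t a) (t a + t b)]
  rw [e₁, e₂, add_comm (t b), chain, sub_add_cancel, sub_eq_zero] at h
  rw [h, shift a b]

end TwistedBracket

theorem bracket_swap_relation_general
    {X : Type*} [AddCommGroup X] (t : X ≃+ X)
    (Rel : AddSubgroup (FreeAbelianGroup (X × X)))
    (hRel : Rel = AddSubgroup.closure
      ({z | ∃ a : X, z = of (a, a - t a)} ∪ {z | ∃ a : X, z = of (a, (0 : X))} ∪
        {z | ∃ a : X, z = of ((0 : X), a)} ∪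
        {z | ∃ x y w : X, z = of (x, w) - of (x, y) - of (t x + y, w)
          + of (t x + w, t y + (w - t w))}))
    (br : X → X → FreeAbelianGroup (X × X) ⧸ Rel)
    (hbr : ∀ a b : X, br a b = QuotientAddGroup.mk (of (a, b)))
    : ∀ a b : X, br a b = br b (t a) := by
  subst hRel
  refine bracket_swap_of_relations t.toAddMonoidHom (fun c => ?_) (fun x y w => ?_)
  · rw [hbr, QuotientAddGroup.eq_zero_iff]
    exact AddSubgroup.subset_closure (Or.inl (Or.inr ⟨c, rfl⟩))
  · simp only [hbr, ← QuotientAddGroup.mk_add, ← QuotientAddGroup.mk_sub,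
      QuotientAddGroup.eq_zero_iff]
    exact AddSubgroup.subset_closure (Or.inr ⟨x, y, w, rfl⟩)

/-- **Lemma.** In the group `G` (the quotient of `ℤ⟨X × X⟩` by the stated
relations, with bracket `br a b = [a, b]`), one has `[a, b] = [b, t a]`. -/
theorem bracket_swap_relation
    {X : Type*} [AddCommGroup X] (t : X ≃+ X)
    (ht : Function.Bijective fun x : X => x - t x)
    (Rel : AddSubgroup (FreeAbelianGroup (X × X)))
    (hRel : Rel = AddSubgroup.closure
      ({z | ∃ a : X, z = of (a, a - t a)} ∪ {z | ∃ a : X, z = of (a, (0 : X))} ∪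
        {z | ∃ a : X, z = of ((0 : X), a)} ∪
        {z | ∃ x y w : X, z = of (x, w) - of (x, y) - of (t x + y, w)
          + of (t x + w, t y + (w - t w))}))
    (br : X → X → FreeAbelianGroup (X × X) ⧸ Rel)
    (hbr : ∀ a b : X, br a b = QuotientAddGroup.mk (of (a, b)))
    : ∀ a b : X, br a b = br b (t a) :=
  bracket_swap_relation_general t Rel hRel br hbr
end

section
/- Let X be an abelian group with automorphism t : X → X such that 1−t is also an automorphism. Let G be the quotient of the free abelian group ℤ⟨X×X⟩ by the subgroup generated by the elements (a,(1−t)a), (a,0), (0,a) for all a ∈ X, and the elements (x,z) − (x,y) − (tx+y, z) + (tx+z, ty+(1−t)z) for all x,y,z ∈ X. Then the assignment (a,b) ↦ a ⊗ b induces a group isomorphism G ≅ (X ⊗_ℤ X)/N, where N is the subgroup of X ⊗_ℤ X generated by all elements x ⊗ y − y ⊗ t x. -/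
/-!
The map `(a, b) ↦ a ⊗ b` respects the relations of `G` because `x ⊗ y ≡ y ⊗ t x` modulo `N`.
For the inverse one shows that in `G` the bracket `[a, b]`, the class of `(a, b)`, is biadditive
and satisfies `[a, b] = [b, t a]`, so that it factors through `X ⊗ X` and kills `N`.
Taking `x = 0` in the four-term relation gives `[y, w] = [w, t y + (1 - t) w]`; together with the
other relations this makes `[w, -]` periodic modulo `(1 - t) w`, whence `[b, w] = [w, t b]`.
The failure of additivity `σ(b, c, w) = [b, c + w] - [b, c] - [b, w]` is then symmetric in its
three arguments, invariant under `t` in each of them, and vanishes at `(b, c, (1 - t) b)`.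
The cocycle identity of `σ` at `(t w, (1 - t) w, z)` then gives `σ(b, (1 - t) w, z) = 0`, and
every element is of the form `(1 - t) w`.
-/

open FreeAbelianGroup TensorProduct

section

variable {X Q : Type*} [AddCommGroup X] [AddCommGroup Q]

/-- `f a b` stands for the class of the generator `(a, b)` in `G`. -/
structure IsTwistedBracket (t : X ≃+ X) (f : X → X → Q) : Prop where
  apply_sub_twist_self : ∀ a, f a (a - t a) = 0
  apply_zero : ∀ a, f a 0 = 0
  zero_apply : ∀ a, f 0 a = 0
  cocycle : ∀ x y w, f x w - f x y - f (t x + y) w + f (t x + w) (t y + (w - t w)) = 0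

def addDefect (f : X → X → Q) (b c w : X) : Q := f b (c + w) - f b c - f b w

theorem addDefect_comm (f : X → X → Q) (b c w : X) : addDefect f b c w = addDefect f b w c := by
  simp only [addDefect, add_comm c w]
  abel

theorem addDefect_add_add (f : X → X → Q) (b c w z : X) :
    addDefect f b c w + addDefect f b (c + w) z = addDefect f b w z + addDefect f b c (w + z) := by
  simp only [addDefect, add_assoc]
  abel

namespace IsTwistedBracket

variable {t : X ≃+ X} {f : X → X → Q}

theorem apply_eq_apply_twist (h : IsTwistedBracket t f) (y w : X) :
    f y w = f w (t y + (w - t w)) := by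
  have h0 := h.cocycle 0 y w
  rw [map_zero, zero_add, zero_add, h.zero_apply, h.zero_apply] at h0
  linear_combination (norm := module) -h0

theorem apply_twist_add_sub (h : IsTwistedBracket t f) (b x w : X) :
    f b (t x + w) - f b (t x) = f (b + x) w - f x w := by
  have shifted : ∀ w, f x w - f x (b + (x - t x)) - f (b + x) w + f b (t x + w) = 0 := by
    intro w
    have h1 := h.cocycle x (b + (x - t x)) w
    rw [show t x + (b + (x - t x)) = b + x by abel] at h1
    have h2 := h.apply_eq_apply_twist b (t x + w)
    rw [show t b + (t x + w - t (t x + w)) = t (b + (x - t x)) + (w - t w) by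
      simp only [map_add, map_sub]; abel] at h2
    linear_combination (norm := module) h1 + h2
  have h0 := shifted 0
  rw [add_zero, h.apply_zero, h.apply_zero] at h0
  linear_combination (norm := module) shifted w - h0

theorem apply_add_sub_twist (h : IsTwistedBracket t f) (w c : X) :
    f w (c + (w - t w)) = f w c := by
  obtain ⟨x, rfl⟩ := t.surjective c
  have hk := h.apply_twist_add_sub w x w
  have h1 := h.apply_eq_apply_twist (w + x) w
  rw [show t (w + x) + (w - t w) = t x + w by rw [map_add]; abel] at h1
  have h2 := h.apply_eq_apply_twist x w
  linear_combination (norm := module) hk + h1 - h2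

theorem apply_comm_twist (h : IsTwistedBracket t f) (b w : X) : f b w = f w (t b) :=
  (h.apply_eq_apply_twist b w).trans (h.apply_add_sub_twist w (t b))

theorem apply_add_sub (h : IsTwistedBracket t f) (b c w : X) :
    f b (c + w) - f b c = f w (c + t b) - f w c := by
  obtain ⟨x, rfl⟩ := t.surjective c
  rw [h.apply_twist_add_sub, h.apply_comm_twist (b + x), h.apply_comm_twist x, map_add,
    add_comm (t b)]

theorem addDefect_eq_addDefect_twist (h : IsTwistedBracket t f) (b c w : X) :
    addDefect f b c w = addDefect f w c (t b) := by
  have h1 := h.apply_add_sub b c w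
  have h2 := h.apply_comm_twist b w
  simp only [addDefect]
  linear_combination (norm := module) h1 - h2

theorem addDefect_comm_left (h : IsTwistedBracket t f) (b c u : X) :
    addDefect f b c u = addDefect f c b u := by
  obtain ⟨a, rfl⟩ := t.surjective u
  rw [← h.addDefect_eq_addDefect_twist a c b, ← h.addDefect_eq_addDefect_twist a b c,
    addDefect_comm]

theorem addDefect_twist_middle (h : IsTwistedBracket t f) (b c w : X) :
    addDefect f b c w = addDefect f b (t c) w := by
  rw [h.addDefect_comm_left b c, h.addDefect_eq_addDefect_twist c b w, addDefect_comm f w b,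
    h.addDefect_comm_left w, addDefect_comm f (t c) w b, h.addDefect_comm_left (t c) b]

theorem addDefect_sub_twist_self (h : IsTwistedBracket t f) (b c : X) :
    addDefect f b c (b - t b) = 0 := by
  rw [addDefect, h.apply_add_sub_twist, h.apply_sub_twist_self, sub_self, sub_zero]

theorem addDefect_add_sub_twist (h : IsTwistedBracket t f) (b w z : X) :
    addDefect f b w (z + (w - t w)) = addDefect f b w z :=
  calc addDefect f b w (z + (w - t w)) = addDefect f w (z + (w - t w)) b := by
        rw [h.addDefect_comm_left b w, addDefect_comm f w b]
    _ = addDefect f w z b := by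
        rw [addDefect, addDefect, add_right_comm, h.apply_add_sub_twist, h.apply_add_sub_twist]
    _ = addDefect f b w z := by
        rw [addDefect_comm f w z b, h.addDefect_comm_left w b z]

theorem addDefect_eq_zero (h : IsTwistedBracket t f) (ht : Function.Surjective fun x => x - t x)
    (b c z : X) : addDefect f b c z = 0 := by
  obtain ⟨w, rfl⟩ := ht c
  have vanish : addDefect f b (t w) (w - t w) = 0 := by
    rw [← h.addDefect_twist_middle, h.addDefect_comm_left]
    exact h.addDefect_sub_twist_self w b
  have shift : addDefect f b (t w) (w - t w + z) = addDefect f b w z := by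
    rw [add_comm, ← h.addDefect_twist_middle, h.addDefect_add_sub_twist]
  have hco := addDefect_add_add f b (t w) (w - t w) z
  rw [vanish, shift, show t w + (w - t w) = w by abel] at hco
  linear_combination (norm := module) -hco

theorem apply_add (h : IsTwistedBracket t f) (ht : Function.Surjective fun x => x - t x)
    (b c w : X) : f b (c + w) = f b c + f b w := by
  have h0 := h.addDefect_eq_zero ht b c w
  rw [addDefect] at h0
  linear_combination (norm := module) h0

theorem add_apply (h : IsTwistedBracket t f) (ht : Function.Surjective fun x => x - t x)
    (a b c : X) : f (a + b) c = f a c + f b c := by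
  rw [h.apply_comm_twist (a + b), map_add, h.apply_add ht, ← h.apply_comm_twist,
    ← h.apply_comm_twist]

def toAddMonoidHom₂ (h : IsTwistedBracket t f) (ht : Function.Surjective fun x => x - t x) :
    X →+ X →+ Q :=
  AddMonoidHom.mk' (fun a => AddMonoidHom.mk' (f a) (h.apply_add ht a))
    fun a b => AddMonoidHom.ext (h.add_apply ht a b)

def liftTensor (h : IsTwistedBracket t f) (ht : Function.Surjective fun x => x - t x) :
    X ⊗[ℤ] X →+ Q :=
  liftAddHom (h.toAddMonoidHom₂ ht) fun r m n => by
    rw [map_zsmul, map_zsmul, AddMonoidHom.smul_apply]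

theorem of_apply_eq_apply_twist (φ : X →ₗ[ℤ] X →ₗ[ℤ] Q) (hφ : ∀ x y, φ x y = φ y (t x)) :
    IsTwistedBracket t fun a b => φ a b where
  apply_sub_twist_self a := by rw [map_sub, hφ a a, sub_self]
  apply_zero a := map_zero _
  zero_apply a := by rw [map_zero, LinearMap.zero_apply]
  cocycle x y w := by
    simp only [map_add, map_sub, LinearMap.add_apply]
    linear_combination (norm := module) hφ x w - hφ x y - hφ y w + hφ w w - hφ y (t x)
      + hφ w (t x)

end IsTwistedBracket

def bracketRelators (t : X ≃+ X) : Set (FreeAbelianGroup (X × X)) :=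
  {z | ∃ a : X, z = of (a, a - t a)} ∪ {z | ∃ a : X, z = of (a, (0 : X))} ∪
    {z | ∃ a : X, z = of ((0 : X), a)} ∪
    {z | ∃ x y w : X, z = of (x, w) - of (x, y) - of (t x + y, w)
      + of (t x + w, t y + (w - t w))}

def twistRelators (t : X ≃+ X) : Set (X ⊗[ℤ] X) :=
  {z | ∃ x y : X, z = x ⊗ₜ[ℤ] y - y ⊗ₜ[ℤ] t x}

abbrev BracketGroup (t : X ≃+ X) : Type _ :=
  FreeAbelianGroup (X × X) ⧸ AddSubgroup.closure (bracketRelators t)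

abbrev TwistedTensorQuotient (t : X ≃+ X) : Type _ :=
  X ⊗[ℤ] X ⧸ AddSubgroup.closure (twistRelators t)

theorem closure_bracketRelators_le_ker_iff {t : X ≃+ X} (φ : FreeAbelianGroup (X × X) →+ Q) :
    AddSubgroup.closure (bracketRelators t) ≤ φ.ker ↔
      IsTwistedBracket t fun a b => φ (of (a, b)) := by
  rw [AddSubgroup.closure_le]
  constructor
  · intro hle
    exact
      { apply_sub_twist_self := fun a => hle (Or.inl (Or.inl (Or.inl ⟨a, rfl⟩)))
        apply_zero := fun a => hle (Or.inl (Or.inl (Or.inr ⟨a, rfl⟩)))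
        zero_apply := fun a => hle (Or.inl (Or.inr ⟨a, rfl⟩))
        cocycle := fun x y w => by simpa using hle (Or.inr ⟨x, y, w, rfl⟩) }
  · rintro h z (((⟨a, rfl⟩ | ⟨a, rfl⟩) | ⟨a, rfl⟩) | ⟨x, y, w, rfl⟩)
    · exact h.apply_sub_twist_self a
    · exact h.apply_zero a
    · exact h.zero_apply a
    · simpa using h.cocycle x y w

theorem closure_twistRelators_le_ker {t : X ≃+ X} (ψ : X ⊗[ℤ] X →+ Q)
    (hψ : ∀ x y, ψ (x ⊗ₜ y) = ψ (y ⊗ₜ t x)) : AddSubgroup.closure (twistRelators t) ≤ ψ.ker := by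
  rw [AddSubgroup.closure_le]
  rintro z ⟨x, y, rfl⟩
  rw [SetLike.mem_coe, AddMonoidHom.mem_ker, map_sub, hψ, sub_self]

theorem isTwistedBracket_mk_tmul (t : X ≃+ X) :
    IsTwistedBracket t fun a b => (QuotientAddGroup.mk (a ⊗ₜ[ℤ] b) : TwistedTensorQuotient t) :=
  IsTwistedBracket.of_apply_eq_apply_twist
    ((TensorProduct.mk ℤ X X).compr₂ (QuotientAddGroup.mk' _).toIntLinearMap) fun x y =>
      QuotientAddGroup.eq_iff_sub_mem.2 (AddSubgroup.subset_closure ⟨x, y, rfl⟩)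

theorem isTwistedBracket_mk_of (t : X ≃+ X) :
    IsTwistedBracket t fun a b => (QuotientAddGroup.mk (of (a, b)) : BracketGroup t) :=
  (closure_bracketRelators_le_ker_iff (QuotientAddGroup.mk' _)).1
    (QuotientAddGroup.ker_mk' _).ge

def toTwistedTensorQuotient (t : X ≃+ X) : BracketGroup t →+ TwistedTensorQuotient t :=
  QuotientAddGroup.lift _
    ((QuotientAddGroup.mk' _).comp (FreeAbelianGroup.lift fun p => p.1 ⊗ₜ p.2))
    ((closure_bracketRelators_le_ker_iff _).2 (isTwistedBracket_mk_tmul t))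

def ofTwistedTensorQuotient (t : X ≃+ X) (ht : Function.Surjective fun x => x - t x) :
    TwistedTensorQuotient t →+ BracketGroup t :=
  QuotientAddGroup.lift _ ((isTwistedBracket_mk_of t).liftTensor ht)
    (closure_twistRelators_le_ker _ (isTwistedBracket_mk_of t).apply_comm_twist)

def bracketGroupEquiv (t : X ≃+ X) (ht : Function.Surjective fun x => x - t x) :
    BracketGroup t ≃+ TwistedTensorQuotient t :=
  AddMonoidHom.toAddEquiv (toTwistedTensorQuotient t) (ofTwistedTensorQuotient t ht)
    (QuotientAddGroup.addMonoidHom_ext _ (FreeAbelianGroup.lift_ext _ _ fun _ => rfl))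
    (QuotientAddGroup.addMonoidHom_ext _ (AddMonoidHom.toIntLinearMap_injective
      (TensorProduct.ext' fun _ _ => rfl)))

end

theorem quotient_iso_tensor_quotient_general
    {X : Type*} [AddCommGroup X] (t : X ≃+ X)
    (ht : Function.Bijective fun x : X => x - t x)
    (Rel : AddSubgroup (FreeAbelianGroup (X × X)))
    (hRel : Rel = AddSubgroup.closure
      ({z | ∃ a : X, z = of (a, a - t a)} ∪ {z | ∃ a : X, z = of (a, (0 : X))} ∪
        {z | ∃ a : X, z = of ((0 : X), a)} ∪
        {z | ∃ x y w : X, z = of (x, w) - of (x, y) - of (t x + y, w)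
          + of (t x + w, t y + (w - t w))}))
    (N : AddSubgroup (X ⊗[ℤ] X))
    (hN : N = AddSubgroup.closure {z | ∃ x y : X, z = x ⊗ₜ[ℤ] y - y ⊗ₜ[ℤ] t x}) :
    ∃ e : (FreeAbelianGroup (X × X) ⧸ Rel) ≃+ ((X ⊗[ℤ] X) ⧸ N),
      ∀ a b : X, e (QuotientAddGroup.mk (of (a, b))) = QuotientAddGroup.mk (a ⊗ₜ[ℤ] b) := by
  subst hRel hN
  exact ⟨bracketGroupEquiv t ht.2, fun _ _ => rfl⟩

/-- **Theorem.** The assignment `(a, b) ↦ a ⊗ b` induces a group isomorphism from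
`G` (the quotient of `ℤ⟨X × X⟩` by the stated relations) to `(X ⊗ X)/N`, where `N`
is the subgroup of `X ⊗ X` generated by all `x ⊗ y - y ⊗ t x`. -/
theorem quotient_iso_tensor_quotient
    {X : Type*} [AddCommGroup X] (t : X ≃+ X)
    (ht : Function.Bijective fun x : X => x - t x)
    (Rel : AddSubgroup (FreeAbelianGroup (X × X)))
    (hRel : Rel = AddSubgroup.closure
      ({z | ∃ a : X, z = of (a, a - t a)} ∪ {z | ∃ a : X, z = of (a, (0 : X))} ∪
        {z | ∃ a : X, z = of ((0 : X), a)} ∪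
        {z | ∃ x y w : X, z = of (x, w) - of (x, y) - of (t x + y, w)
          + of (t x + w, t y + (w - t w))}))
    (br : X → X → FreeAbelianGroup (X × X) ⧸ Rel)
    (hbr : ∀ a b : X, br a b = QuotientAddGroup.mk (of (a, b)))
    (N : AddSubgroup (X ⊗[ℤ] X))
    (hN : N = AddSubgroup.closure {z | ∃ x y : X, z = x ⊗ₜ[ℤ] y - y ⊗ₜ[ℤ] t x}) :
    ∃ e : (FreeAbelianGroup (X × X) ⧸ Rel) ≃+ ((X ⊗[ℤ] X) ⧸ N),
      ∀ a b : X, e (QuotientAddGroup.mk (of (a, b))) = QuotientAddGroup.mk (a ⊗ₜ[ℤ] b) :=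
  quotient_iso_tensor_quotient_general t ht Rel hRel N hN
end

section
/- Let X be an abelian group with an automorphism t : X → X, made into an Alexander quandle by a * b = t a + (1−t) b. Let S be the subgroup of the permutation group of X generated by the right translations x ↦ x * y = t x + (1−t) y for all y ∈ X. Then S acts transitively on X (i.e., the Alexander quandle is connected) if and only if 1−t : X → X is surjective. -/
/-!
Every right translation `ρ y` moves each point `x` by `(y - x) - t (y - x)`, an element of the
image of `1 - t`; this property is preserved under composition and inversion, so the whole group
`S` only moves points inside cosets of that image, and transitivity forces `1 - t` to be onto.
Conversely `ρ y * (ρ 0)⁻¹` is the translation by `y - t y`, so when `1 - t` is onto, `S` contains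
every translation of `X`.
-/

namespace Equiv.Perm

variable {X : Type*} [AddCommGroup X]

def displacementSubgroup (H : AddSubgroup X) : Subgroup (Perm X) where
  carrier := {g | ∀ x, g x - x ∈ H}
  one_mem' := by simp
  mul_mem' {a b} ha hb x := by
    have hsplit : a (b x) - x = (a (b x) - b x) + (b x - x) := by abel
    simpa only [mul_apply, hsplit] using H.add_mem (ha (b x)) (hb x)
  inv_mem' {a} ha x := by
    have hneg : a⁻¹ x - x = -(a (a⁻¹ x) - a⁻¹ x) := by simp
    simpa only [hneg] using H.neg_mem (ha (a⁻¹ x))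

end Equiv.Perm

open Equiv Perm

section AlexanderQuandle

variable {X : Type*} [AddCommGroup X] {t : X ≃+ X} {ρ : X → Perm X}

theorem closure_range_le_displacementSubgroup (hρ : ∀ y x, ρ y x = t x + (y - t y)) :
    Subgroup.closure (Set.range ρ) ≤
      displacementSubgroup (AddMonoidHom.id X - t.toAddMonoidHom).range := by
  rw [Subgroup.closure_le]
  rintro _ ⟨y, rfl⟩ x
  refine ⟨y - x, ?_⟩
  simp only [AddMonoidHom.sub_apply, AddMonoidHom.id_apply, AddEquiv.coe_toAddMonoidHom, hρ,
    map_sub]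
  abel

theorem mul_inv_apply_of_right_translation (hρ : ∀ y x, ρ y x = t x + (y - t y)) (y z x : X) :
    (ρ y * (ρ z)⁻¹) x = x + ((y - t y) - (z - t z)) := by
  have hyz : ∀ w, ρ y w = ρ z w + ((y - t y) - (z - t z)) := fun w => by
    rw [hρ, hρ]
    abel
  rw [mul_apply, hyz, coe_inv, apply_symm_apply]

theorem exists_mem_closure_apply_eq_add (hρ : ∀ y x, ρ y x = t x + (y - t y)) (x y : X) :
    ∃ g ∈ Subgroup.closure (Set.range ρ), g x = x + (y - t y) := by
  refine ⟨ρ y * (ρ 0)⁻¹, ?_, by simp [mul_inv_apply_of_right_translation hρ]⟩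
  exact mul_mem (Subgroup.subset_closure ⟨y, rfl⟩) (inv_mem (Subgroup.subset_closure ⟨0, rfl⟩))

end AlexanderQuandle

/-- **Proposition.** Let `X` be an abelian group with automorphism `t`, made into an
Alexander quandle by `a * b = t a + (1 - t) b`.  Let `S` be the subgroup of the
permutation group of `X` generated by the right translations
`ρ y : x ↦ x * y = t x + (1 - t) y`.  Then `S` acts transitively on `X` (i.e. the
Alexander quandle is connected) if and only if `1 - t : X → X` is surjective. -/
theorem alexander_quandle_connected_iff_one_sub_t_surjective
    {X : Type*} [AddCommGroup X] (t : X ≃+ X)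
    (ρ : X → Equiv.Perm X) (hρ : ∀ y x, ρ y x = t x + (y - t y))
    (S : Subgroup (Equiv.Perm X)) (hS : S = Subgroup.closure (Set.range ρ)) :
    (∀ x y : X, ∃ g ∈ S, g x = y) ↔ Function.Surjective fun x : X => x - t x := by
  subst hS
  constructor
  · intro htrans y
    obtain ⟨g, hg, rfl⟩ := htrans 0 y
    obtain ⟨z, hz⟩ := closure_range_le_displacementSubgroup hρ hg 0
    exact ⟨z, by simpa using hz⟩
  · intro hsurj x y
    obtain ⟨a, ha : a - t a = y - x⟩ := hsurj (y - x)
    obtain ⟨g, hg, hgx⟩ := exists_mem_closure_apply_eq_add hρ x a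
    exact ⟨g, hg, by rw [hgx, ha, add_sub_cancel]⟩
end

section
/- Let X = ⊕_{i∈ℕ} ℤ be the free abelian group of countable rank (finitely supported functions ℕ → ℤ), and let f : X → X be the additive shift endomorphism defined by (f g)(n) = g(n+1). Then f is surjective but not injective, while the endomorphism id − f is bijective (an automorphism of X). Consequently, setting t = 1 − f, the Alexander quandle (X, a*b = ta+(1−t)b) is connected but not a quasigroup. -/
/-- Auxiliary: shifted sum solving `g - shift g = b`. -/
noncomputable def shiftAntideriv (b : ℕ →₀ ℤ) : ℕ →₀ ℤ :=
  Finsupp.onFinset (Finset.range (b.support.sup id + 1))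
    (fun n => ∑ k ∈ b.support.filter (fun k => n ≤ k), b k)
    (by
      intro n hn
      rw [Finset.mem_range]
      by_contra h
      push_neg at h
      have : b.support.filter (fun k => n ≤ k) = ∅ := by
        apply Finset.filter_false_of_mem
        intro k hk
        have hk' : k ≤ b.support.sup id := Finset.le_sup (f := id) hk
        omega
      simp [this] at hn)

lemma shiftAntideriv_apply (b : ℕ →₀ ℤ) (n : ℕ) :
    shiftAntideriv b n = ∑ k ∈ b.support.filter (fun k => n ≤ k), b k := rfl

lemma shiftAntideriv_sub (b : ℕ →₀ ℤ) (n : ℕ) :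
    shiftAntideriv b n - shiftAntideriv b (n + 1) = b n := by
  rw [shiftAntideriv_apply, shiftAntideriv_apply]
  have hsplit : b.support.filter (fun k => n ≤ k)
      = (b.support.filter (fun k => k = n)) ∪ (b.support.filter (fun k => n + 1 ≤ k)) := by
    ext k
    simp only [Finset.mem_filter, Finset.mem_union]
    by_cases hk : k ∈ b.support <;> simp [hk] <;> omega
  have hdisj : Disjoint (b.support.filter (fun k => k = n))
      (b.support.filter (fun k => n + 1 ≤ k)) := by
    rw [Finset.disjoint_left]
    intro k hk1 hk2
    simp only [Finset.mem_filter] at hk1 hk2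
    omega
  rw [hsplit, Finset.sum_union hdisj]
  have hsing : ∑ k ∈ b.support.filter (fun k => k = n), b k = b n := by
    rcases em (n ∈ b.support) with h | h
    · rw [Finset.filter_eq', if_pos h, Finset.sum_singleton]
    · rw [Finset.filter_eq', if_neg h, Finset.sum_empty, Finsupp.notMem_support_iff.mp h]
  rw [hsing]
  ring

/-- **Example (a connected Alexander quandle which is not a quasigroup).**
Let `X = ⊕_{i ∈ ℕ} ℤ` (finitely supported functions `ℕ → ℤ`) and let `f : X → X` be
the additive shift endomorphism with `(f g) n = g (n + 1)`.  Then `f` is surjective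
but not injective, while `id - f` is bijective.  Consequently, with `t = 1 - f`, the
Alexander quandle `(X, a * b = t a + (1 - t) b)` — whose operation is
`a * b = (a - f a) + f b` — is connected (`a * c = b` is always solvable in `c`)
but not a quasigroup (the solution is not unique). -/
theorem shift_gives_connected_non_quasigroup_alexander_quandle
    (f : (ℕ →₀ ℤ) →+ (ℕ →₀ ℤ)) (hf : ∀ (g : ℕ →₀ ℤ) (n : ℕ), f g n = g (n + 1)) :
    Function.Surjective f ∧ ¬ Function.Injective f ∧
      Function.Bijective (fun g : ℕ →₀ ℤ => g - f g) ∧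
      (∀ a b : ℕ →₀ ℤ, ∃ c, (a - f a) + f c = b) ∧
      ¬ (∀ a b : ℕ →₀ ℤ, ∃! c, (a - f a) + f c = b) := by
  have hsurj : Function.Surjective f := by
    intro g
    refine ⟨Finsupp.mapDomain Nat.succ g, ?_⟩
    ext n
    rw [hf]
    exact Finsupp.mapDomain_apply Nat.succ_injective g n
  have hzero : f (Finsupp.single 0 1) = 0 := by
    ext n
    rw [hf]
    simp
  have hninj : ¬ Function.Injective f := by
    intro h
    have h0 : f (Finsupp.single 0 1) = f 0 := by rw [hzero, map_zero]
    have := h h0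
    have := congrArg (fun g : ℕ →₀ ℤ => g 0) this
    simp at this
  have hinj : Function.Injective (fun g : ℕ →₀ ℤ => g - f g) := by
    intro g h hgh
    simp only at hgh
    have hd : (g - h) = f (g - h) := by
      rw [map_sub]
      exact sub_eq_sub_iff_sub_eq_sub.mp hgh
    set d : ℕ →₀ ℤ := g - h with hdef
    have hstep : ∀ n, d n = d (n + 1) := by
      intro n
      conv_lhs => rw [hd]
      rw [hf]
    have hconst : ∀ n k, d n = d (n + k) := by
      intro n k
      induction k with
      | zero => rfl
      | succ m ih => rw [ih, ← Nat.add_assoc, ← hstep]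
    have hdz : d = 0 := by
      ext n
      have hout : d (n + (d.support.sup id + 1)) = 0 := by
        apply Finsupp.notMem_support_iff.mp
        intro hmem
        have := Finset.le_sup (f := id) hmem
        simp only [id] at this
        omega
      rw [hconst n (d.support.sup id + 1), hout]
      rfl
    exact sub_eq_zero.mp hdz
  have hbijsurj : Function.Surjective (fun g : ℕ →₀ ℤ => g - f g) := by
    intro b
    refine ⟨shiftAntideriv b, ?_⟩
    ext n
    rw [Finsupp.sub_apply, hf]
    exact shiftAntideriv_sub b n
  refine ⟨hsurj, hninj, ⟨hinj, hbijsurj⟩, ?_, ?_⟩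
  · intro a b
    obtain ⟨c, hc⟩ := hsurj (b - (a - f a))
    exact ⟨c, by rw [hc]; abel⟩
  · intro h
    obtain ⟨c, hc, huniq⟩ := h 0 0
    have h1 : (0 : ℕ →₀ ℤ) = c := huniq 0 (by simp)
    have h2 : Finsupp.single 0 1 = c := huniq (Finsupp.single 0 1) (by simp [hzero])
    rw [← h1] at h2
    have := congrArg (fun g : ℕ →₀ ℤ => g 0) h2
    simp at this
end
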